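/- Let X be the set of filters of an inverse semigroup G, and for t ∈ G let X_t = {ξ ∈ X : t ∈ ξ}. For ξ ∈ X_{t*}, define π_t(ξ) = ⟨tξ⟩, the filter generated by {ts : s ∈ ξ}. Then each π_t is a well-defined bijection X_{t*} → X_t, and π: G → I(X) is a partial action (a partial homomorphism into the symmetric inverse semigroup of X); in particular π_{s*} = π_s⁻¹, π_s(π_t(ξ)) = π_{st}(ξ) for ξ ∈ X_{t*} ∩ X_{t*s*}, and π_s(X_{s*} ∩ X_t) = X_s ∩ X_{st}. -/
import Mathlib


universe u v

/-- An inverse semigroup: every element has a unique generalized inverse. -/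
class InverseSemigroup (G : Type u) extends Semigroup G, Star G where
  mul_star_mul_self : ∀ s : G, s * star s * s = s
  star_mul_self_star : ∀ s : G, star s * s * star s = star s
  star_unique : ∀ s t : G, s * t * s = s → t * s * t = t → t = star s

variable (G : Type u) [InverseSemigroup G]

/-- The defining relations of the prefix expansion S(G). -/
inductive ExpRel : FreeSemigroup G → FreeSemigroup G → Prop
  | rel1 (s t : G) : ExpRel (.of s * .of t * .of (star t)) (.of (s * t) * .of (star t))
  | rel2 (s t : G) : ExpRel (.of (star s) * .of s * .of t) (.of (star s) * .of (s * t))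
  | rel3 (s : G) : ExpRel (.of s * .of (star s) * .of s) (.of s)

/-- The congruence generated by the defining relations. -/
def expCon : Con (FreeSemigroup G) := conGen (ExpRel G)

/-- The prefix expansion S(G) of the inverse semigroup G. -/
def SG : Type u := (expCon G).Quotient

instance : Semigroup (SG G) := Con.semigroup (expCon G)

variable {G}

/-- The canonical generator [s] of S(G). -/
def gen (s : G) : SG G := ((FreeSemigroup.of s : FreeSemigroup G) : (expCon G).Quotient)

/-- ε_s = [s][s*] in S(G). -/
def eps (s : G) : SG G := gen s * gen (star s)

/-- ε_{s₁}⋯ε_{s_n}·x for a list [s₁,…,s_n]. -/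
def epsList (l : List G) (x : SG G) : SG G := (l.map eps).foldr (· * ·) x

/-- ε_A · x for a finite set A ⊆ G. -/
noncomputable def epsSet (A : Finset G) (x : SG G) : SG G := epsList A.toList x

/-- The normal form condition on the pair (A, t). -/
def IsNormalForm (A : Finset G) (t : G) : Prop :=
  t ∈ A ∧ t * star t ∈ A ∧ ∀ a ∈ A, a * star a = t * star t

/-- A partial homomorphism from an inverse semigroup to a semigroup. -/
structure IsPartialHom {H : Type v} [Semigroup H] (π : G → H) : Prop where
  rel1 : ∀ s t : G, π s * π t * π (star t) = π (s * t) * π (star t)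
  rel2 : ∀ s t : G, π (star s) * π s * π t = π (star s) * π (s * t)
  rel3 : ∀ s : G, π s * π (star s) * π s = π s

/-- The natural partial order: x ≤ y iff x = y·e for some idempotent e. -/
def natLE {H : Type v} [Semigroup H] (x y : H) : Prop := ∃ e : H, e * e = e ∧ x = y * e

/-- A filter in an inverse semigroup. -/
def IsFilter (ξ : Set G) : Prop :=
  ξ.Nonempty ∧ ∀ e s : G, e * e = e → (e * s ∈ ξ ↔ e ∈ ξ ∧ s ∈ ξ)

/-- The map ξ ↦ ⟨tξ⟩ on subsets of G. -/
def actMap {G : Type u} [InverseSemigroup G] (t : G) (ξ : Set G) : Set G :=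
  {u : G | ∃ s ∈ ξ, natLE (t * s) u}

section Aux
variable {G : Type u} [InverseSemigroup G]

lemma pa_sss (s : G) : s * star s * s = s := InverseSemigroup.mul_star_mul_self s
lemma pa_s's' (s : G) : star s * s * star s = star s := InverseSemigroup.star_mul_self_star s

lemma pa_star_star (s : G) : star (star s) = s :=
  (InverseSemigroup.star_unique (star s) s (pa_s's' s) (pa_sss s)).symm

lemma pa_idem_star {e : G} (he : e * e = e) : star e = e :=
  (InverseSemigroup.star_unique e e (by rw [he, he]) (by rw [he, he])).symm

lemma lcan {a b c : G} (h : a * b = c) (x : G) : a * (b * x) = c * x := by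
  rw [← mul_assoc, h]

lemma lcan3 {a b c d : G} (h : a * b * c = d) (x : G) : a * (b * (c * x)) = d * x := by
  rw [← mul_assoc, ← mul_assoc, h]

lemma pa_idem_ss' (s : G) : (s * star s) * (s * star s) = s * star s := by
  rw [← mul_assoc, pa_sss]

lemma pa_idem_s's (s : G) : (star s * s) * (star s * s) = star s * s := by
  rw [← mul_assoc, pa_s's']

lemma pa_idem_mul {e f : G} (he : e * e = e) (hf : f * f = f) :
    (e * f) * (e * f) = e * f := by
  set x := star (e * f) with hx
  have h1 : (e * f) * (f * x * e) * (e * f) = e * f := by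
    have key := pa_sss (e * f)
    rw [← hx] at key
    simp only [mul_assoc] at key ⊢
    rw [lcan hf, lcan he]
    exact key
  have h2 : (f * x * e) * (e * f) * (f * x * e) = f * x * e := by
    have key := pa_s's' (e * f)
    rw [← hx] at key
    have key2 := congrArg (· * e) key
    simp only [mul_assoc] at key2 ⊢
    rw [lcan he, lcan hf, key2]
  have hinv : f * x * e = x := InverseSemigroup.star_unique (e * f) (f * x * e) h1 h2
  have hxx : (f * x * e) * (f * x * e) = f * x * e := by
    have key := pa_s's' (e * f)
    rw [← hx] at key
    have key2 := congrArg (· * e) key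
    simp only [mul_assoc] at key2 ⊢
    rw [key2]
  rw [hinv] at hxx
  have hef : e * f = x := by
    have h3 := pa_idem_star hxx
    rw [hx, pa_star_star] at h3
    rw [← hx] at h3
    exact h3
  rw [hef]; exact hxx

lemma pa_idem_comm {e f : G} (he : e * e = e) (hf : f * f = f) : e * f = f * e := by
  have hef := pa_idem_mul he hf
  have hfe := pa_idem_mul hf he
  have h1 : (e * f) * (f * e) * (e * f) = e * f := by
    have key := hef
    simp only [mul_assoc] at key ⊢
    rw [lcan hf, lcan he]
    exact key
  have h2 : (f * e) * (e * f) * (f * e) = f * e := by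
    have key := hfe
    simp only [mul_assoc] at key ⊢
    rw [lcan he, lcan hf]
    exact key
  have := InverseSemigroup.star_unique (e * f) (f * e) h1 h2
  rw [pa_idem_star hef] at this
  exact this.symm

lemma pa_star_mul (s t : G) : star (s * t) = star t * star s := by
  have hc := pa_idem_comm (pa_idem_ss' t) (pa_idem_s's s)
  have h1 : (s * t) * (star t * star s) * (s * t) = s * t := by
    calc (s * t) * (star t * star s) * (s * t)
        = s * ((t * star t) * (star s * s)) * t := by simp only [mul_assoc]
      _ = s * ((star s * s) * (t * star t)) * t := by rw [hc]
      _ = (s * star s * s) * (t * star t * t) := by simp only [mul_assoc]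
      _ = s * t := by rw [pa_sss, pa_sss]
  have h2 : (star t * star s) * (s * t) * (star t * star s) = star t * star s := by
    calc (star t * star s) * (s * t) * (star t * star s)
        = star t * ((star s * s) * (t * star t)) * star s := by simp only [mul_assoc]
      _ = star t * ((t * star t) * (star s * s)) * star s := by rw [← hc]
      _ = (star t * t * star t) * (star s * s * star s) := by simp only [mul_assoc]
      _ = star t * star s := by rw [pa_s's', pa_s's']
  exact (InverseSemigroup.star_unique (s * t) (star t * star s) h1 h2).symm

lemma pa_conj_idem {e : G} (he : e * e = e) (y : G) :
    (y * e * star y) * (y * e * star y) = y * e * star y := by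
  have hc := pa_idem_comm he (pa_idem_s's y)
  calc (y * e * star y) * (y * e * star y)
      = y * (e * (star y * y)) * (e * star y) := by simp only [mul_assoc]
    _ = y * ((star y * y) * e) * (e * star y) := by rw [hc]
    _ = (y * star y * y) * (e * (e * star y)) := by simp only [mul_assoc]
    _ = y * (e * star y) := by rw [pa_sss, lcan he]
    _ = y * e * star y := by rw [mul_assoc]

lemma natLE_refl (x : G) : natLE x x :=
  ⟨star x * x, pa_idem_s's x, by rw [← mul_assoc, pa_sss]⟩

lemma natLE_trans {x y z : G} (h1 : natLE x y) (h2 : natLE y z) : natLE x z := by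
  obtain ⟨e, he, hx⟩ := h1
  obtain ⟨f, hf, hy⟩ := h2
  exact ⟨f * e, pa_idem_mul hf he, by rw [hx, hy, mul_assoc]⟩

lemma natLE_of_left {e : G} (he : e * e = e) (y : G) : natLE (e * y) y := by
  have hc := pa_idem_comm he (pa_idem_ss' y)
  refine ⟨star y * e * y, ?_, ?_⟩
  · calc (star y * e * y) * (star y * e * y)
        = star y * (e * (y * star y)) * (e * y) := by simp only [mul_assoc]
      _ = star y * ((y * star y) * e) * (e * y) := by rw [hc]
      _ = (star y * y * star y) * (e * (e * y)) := by simp only [mul_assoc]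
      _ = star y * (e * y) := by rw [pa_s's', lcan he]
      _ = star y * e * y := by rw [mul_assoc]
  · have : y * (star y * e * y) = e * y := by
      calc y * (star y * e * y) = ((y * star y) * e) * y := by simp only [mul_assoc]
        _ = (e * (y * star y)) * y := by rw [← hc]
        _ = e * (y * star y * y) := by simp only [mul_assoc]
        _ = e * y := by rw [pa_sss]
    exact this.symm

lemma natLE_left {x y : G} (h : natLE x y) : ∃ e : G, e * e = e ∧ x = e * y := by
  obtain ⟨e, he, hx⟩ := h
  have hc := pa_idem_comm he (pa_idem_s's y)
  refine ⟨y * e * star y, pa_conj_idem he y, ?_⟩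
  have : (y * e * star y) * y = y * e := by
    calc (y * e * star y) * y = y * (e * (star y * y)) := by simp only [mul_assoc]
      _ = y * ((star y * y) * e) := by rw [hc]
      _ = (y * star y * y) * e := by simp only [mul_assoc]
      _ = y * e := by rw [pa_sss]
  rw [hx, this]

lemma natLE_mul_left {x y : G} (h : natLE x y) (z : G) : natLE (z * x) (z * y) := by
  obtain ⟨e, he, hx⟩ := h
  exact ⟨e, he, by rw [hx, mul_assoc]⟩

lemma natLE_mul_idem_right {x y f : G} (h : natLE x y) (hf : f * f = f) : natLE (x * f) y := by
  obtain ⟨e, he, hx⟩ := h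
  exact ⟨e * f, pa_idem_mul he hf, by rw [hx, mul_assoc]⟩

lemma natLE_mul {x y w z : G} (h1 : natLE x y) (h2 : natLE w z) : natLE (x * w) (y * z) := by
  obtain ⟨e, he, hx⟩ := natLE_left h1
  obtain ⟨f, hf, hw⟩ := h2
  have hxw : x * w = (e * (y * z)) * f := by rw [hx, hw]; simp only [mul_assoc]
  rw [hxw]
  exact natLE_mul_idem_right (natLE_of_left he (y * z)) hf

lemma natLE_mul_star {x y : G} (h : natLE x y) : natLE (x * star x) (y * star y) := by
  obtain ⟨e, he, hx⟩ := h
  have hc := pa_idem_comm he (pa_idem_s's y)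
  have hsx : star x = e * star y := by rw [hx, pa_star_mul, pa_idem_star he]
  have h1 : x * star x = y * e * star y := by
    rw [hsx, hx]
    calc (y * e) * (e * star y) = y * (e * (e * star y)) := by simp only [mul_assoc]
      _ = y * (e * star y) := by rw [lcan he]
      _ = y * e * star y := by rw [mul_assoc]
  have h2 : (y * star y) * (y * e * star y) = y * e * star y := by
    calc (y * star y) * (y * e * star y)
        = y * ((star y * y) * e) * star y := by simp only [mul_assoc]
      _ = y * (e * (star y * y)) * star y := by rw [← hc]
      _ = (y * e) * (star y * y * star y) := by simp only [mul_assoc]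
      _ = y * e * star y := by rw [pa_s's']
  exact ⟨y * e * star y, pa_conj_idem he y, by rw [h1]; exact h2.symm⟩

lemma filter_up {ξ : Set G} (hξ : IsFilter ξ) {x y : G} (hx : x ∈ ξ) (h : natLE x y) :
    y ∈ ξ := by
  obtain ⟨e, he, hxe⟩ := natLE_left h
  have : e * y ∈ ξ := by rw [← hxe]; exact hx
  exact ((hξ.2 e y he).1 this).2

lemma filter_mul_star {ξ : Set G} (hξ : IsFilter ξ) {x : G} (hx : x ∈ ξ) :
    x * star x ∈ ξ := by
  have h : (x * star x) * x ∈ ξ := by rw [pa_sss]; exact hx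
  exact ((hξ.2 _ x (pa_idem_ss' x)).1 h).1

lemma filter_mul {ξ : Set G} (hξ : IsFilter ξ) {e s : G} (he : e * e = e)
    (heξ : e ∈ ξ) (hs : s ∈ ξ) : e * s ∈ ξ := (hξ.2 e s he).2 ⟨heξ, hs⟩

lemma filter_star_mul_self {ξ : Set G} (hξ : IsFilter ξ) {t : G} (ht : star t ∈ ξ) :
    star t * t ∈ ξ := by
  have := filter_mul_star hξ ht
  rwa [pa_star_star] at this

lemma pa_part1 : ∀ (t : G) (ξ : Set G), IsFilter ξ → star t ∈ ξ →
    IsFilter (actMap t ξ) ∧ t ∈ actMap t ξ := by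
  intro t ξ hξ ht
  have htt : star t * t ∈ ξ := filter_star_mul_self hξ ht
  have htmem : t ∈ actMap t ξ :=
    ⟨star t * t, htt, by rw [← mul_assoc, pa_sss]; exact natLE_refl t⟩
  refine ⟨⟨⟨t, htmem⟩, ?_⟩, htmem⟩
  intro e u he
  constructor
  · rintro ⟨s, hs, hle⟩
    constructor
    · refine ⟨s * star s * star t,
        filter_mul hξ (pa_idem_ss' s) (filter_mul_star hξ hs) ht, ?_⟩
      have h1 : t * (s * star s * star t) = (t * s) * star (t * s) := by
        rw [pa_star_mul]; simp only [mul_assoc]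
      rw [h1]
      refine natLE_trans (natLE_mul_star hle) ?_
      have h3 : (e * u) * star (e * u) = e * (u * star u * e) := by
        rw [pa_star_mul, pa_idem_star he]; simp only [mul_assoc]
      rw [h3]
      exact ⟨u * star u * e, pa_idem_mul (pa_idem_ss' u) he, rfl⟩
    · exact ⟨s, hs, natLE_trans hle (natLE_of_left he u)⟩
  · rintro ⟨⟨s₁, h₁, le₁⟩, s₂, h₂, le₂⟩
    refine ⟨s₁ * star s₁ * s₂,
      filter_mul hξ (pa_idem_ss' s₁) (filter_mul_star hξ h₁) h₂, ?_⟩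
    have key : ((t * s₁) * star (t * s₁)) * (t * s₂) = t * (s₁ * star s₁ * s₂) := by
      rw [pa_star_mul]
      have hc := pa_idem_comm (pa_idem_ss' s₁) (pa_idem_s's t)
      calc (t * s₁) * (star s₁ * star t) * (t * s₂)
          = t * ((s₁ * star s₁) * (star t * t)) * s₂ := by simp only [mul_assoc]
        _ = t * ((star t * t) * (s₁ * star s₁)) * s₂ := by rw [hc]
        _ = (t * star t * t) * (s₁ * star s₁ * s₂) := by simp only [mul_assoc]
        _ = t * (s₁ * star s₁ * s₂) := by rw [pa_sss]
    rw [← key]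
    have ha : natLE ((t * s₁) * star (t * s₁)) e := by
      have h := natLE_mul_star le₁
      rwa [pa_idem_star he, he] at h
    exact natLE_mul ha le₂

lemma pa_part2 : ∀ (t : G) (ξ : Set G), IsFilter ξ → star t ∈ ξ →
    actMap (star t) (actMap t ξ) = ξ := by
  intro t ξ hξ ht
  have htt : star t * t ∈ ξ := filter_star_mul_self hξ ht
  ext x
  constructor
  · rintro ⟨s', ⟨s, hs, le1⟩, le2⟩
    have h2 : natLE (star t * (t * s)) x :=
      natLE_trans (natLE_mul_left le1 (star t)) le2
    have hmem : star t * (t * s) ∈ ξ := by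
      rw [← mul_assoc]; exact filter_mul hξ (pa_idem_s's t) htt hs
    exact filter_up hξ hmem h2
  · intro hx
    refine ⟨t * (star t * t * x),
      ⟨star t * t * x, filter_mul hξ (pa_idem_s's t) htt hx, natLE_refl _⟩, ?_⟩
    have h1 : star t * (t * (star t * t * x)) = (star t * t) * x := by
      simp only [mul_assoc]
      rw [lcan3 (pa_s's' t)]
    rw [h1]
    exact natLE_of_left (pa_idem_s's t) x

lemma pa_part3 : ∀ (s t : G) (ξ : Set G), IsFilter ξ → star t ∈ ξ → star t * star s ∈ ξ →
    actMap s (actMap t ξ) = actMap (s * t) ξ := by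
  intro s t ξ _ _ _
  ext u
  constructor
  · rintro ⟨r', ⟨r, hr, le1⟩, le2⟩
    refine ⟨r, hr, ?_⟩
    have h := natLE_mul_left le1 s
    rw [← mul_assoc] at h
    exact natLE_trans h le2
  · rintro ⟨r, hr, le⟩
    exact ⟨t * r, ⟨r, hr, natLE_refl _⟩, by rw [← mul_assoc]; exact le⟩

lemma pa_part4 : ∀ s t : G,
    {η : Set G | ∃ ξ : Set G, IsFilter ξ ∧ star s ∈ ξ ∧ t ∈ ξ ∧ η = actMap s ξ}
      = {η : Set G | IsFilter η ∧ s ∈ η ∧ s * t ∈ η} := by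
  intro s t
  ext η
  simp only [Set.mem_setOf_eq]
  constructor
  · rintro ⟨ξ, hξ, hs', htξ, rfl⟩
    obtain ⟨hfil, hsmem⟩ := pa_part1 s ξ hξ hs'
    refine ⟨hfil, hsmem, ?_⟩
    refine ⟨star s * s * t,
      filter_mul hξ (pa_idem_s's s) (filter_star_mul_self hξ hs') htξ, ?_⟩
    have h1 : s * (star s * s * t) = s * t := by
      simp only [mul_assoc]; rw [lcan3 (pa_sss s)]
    rw [h1]
    exact natLE_refl _
  · rintro ⟨hη, hsη, hstη⟩
    have hss : star (star s) ∈ η := by rw [pa_star_star]; exact hsη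
    refine ⟨actMap (star s) η, (pa_part1 (star s) η hη hss).1,
      (pa_part1 (star s) η hη hss).2, ?_, ?_⟩
    · refine ⟨s * t, hstη, ?_⟩
      rw [← mul_assoc]
      exact natLE_of_left (pa_idem_s's s) t
    · have h2 := pa_part2 (star s) η hη hss
      rw [pa_star_star] at h2
      exact h2.symm

end Aux

theorem canonical_partial_action (G : Type u) [InverseSemigroup G] :
    (∀ (t : G) (ξ : Set G), IsFilter ξ → star t ∈ ξ →
        IsFilter (actMap t ξ) ∧ t ∈ actMap t ξ) ∧
    (∀ (t : G) (ξ : Set G), IsFilter ξ → star t ∈ ξ →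
        actMap (star t) (actMap t ξ) = ξ) ∧
    (∀ (s t : G) (ξ : Set G), IsFilter ξ → star t ∈ ξ → star t * star s ∈ ξ →
        actMap s (actMap t ξ) = actMap (s * t) ξ) ∧
    (∀ s t : G,
        {η : Set G | ∃ ξ : Set G, IsFilter ξ ∧ star s ∈ ξ ∧ t ∈ ξ ∧ η = actMap s ξ}
          = {η : Set G | IsFilter η ∧ s ∈ η ∧ s * t ∈ η}) :=
  ⟨pa_part1, pa_part2, pa_part3, pa_part4⟩
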